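/- If ρ_AB is a bipartite density operator, π a pure state on system A, and Tr(π Tr_B ρ_AB) ≥ 1 − δ for some δ ≥ 0, then ‖ρ_AB − π ⊗ Tr_A ρ_AB‖_Tr ≤ 2√δ + δ (gentle measurement corollary). -/

import Mathlib

/-
With `P = π ⊗ 1` and `Q = 1 - P`, one has
`ρ - π ⊗ Tr_A ρ = (ρ - P ρ P) - π ⊗ Tr_A (Q ρ Q)`: as `π` has rank one,
`P ρ P = π ⊗ Tr_A (P ρ P)`, and `Tr_A` kills the cross terms `P ρ Q`, `Q ρ P`.
Let `ε = Tr (Q ρ) ≤ δ`. The positive term `π ⊗ Tr_A (Q ρ Q)` has trace `ε`, and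
`ρ - P ρ P = Q ρ + P ρ Q`. Writing `ρ = Bᴴ B`, `S ρ T = (S Bᴴ) (B T)` is a product of factors
with Frobenius norms `√Tr (S ρ)` and `√Tr (T ρ)`, so each of `Q ρ`, `P ρ Q` contributes at most
`√ε`. Trace norms are bounded by duality: `2 ‖X‖_Tr = Re Tr (C X)` for the contraction `C`
adjoint to the polar factor of `X`, while `Re Tr (C Y Z) ≤ ‖Y‖_F ‖Z‖_F` for every contraction `C`.
-/
open Matrix
open scoped ComplexOrder Kronecker

/-- Trace norm (with the conventional 1/2 normalization used for trace distance). -/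
noncomputable def traceNorm {n : Type*} [Fintype n] [DecidableEq n]
    (A : Matrix n n ℂ) : ℝ :=
  ((((Matrix.posSemidef_conjTranspose_mul_self A).1.eigenvectorUnitary : Matrix n n ℂ) *
      diagonal (((↑) : ℝ → ℂ) ∘ (√·) ∘ (Matrix.posSemidef_conjTranspose_mul_self A).1.eigenvalues) *
      (star ((Matrix.posSemidef_conjTranspose_mul_self A).1.eigenvectorUnitary : Matrix n n ℂ))).trace).re / 2

def IsDensity {n : Type*} [Fintype n] [DecidableEq n] (ρ : Matrix n n ℂ) : Prop :=
  ρ.PosSemidef ∧ ρ.trace = 1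

noncomputable def ptraceB {A B : Type*} [Fintype A] [Fintype B]
    (ρ : Matrix (A × B) (A × B) ℂ) : Matrix A A ℂ :=
  fun a a' => ∑ b, ρ (a, b) (a', b)

noncomputable def ptraceA {A B : Type*} [Fintype A] [Fintype B]
    (ρ : Matrix (A × B) (A × B) ℂ) : Matrix B B ℂ :=
  fun b b' => ∑ a, ρ (a, b) (a, b')

namespace Matrix

section Contraction

variable {n : Type*} [Fintype n]

theorem _root_.IsStarProjection.posSemidef {R : Type*} [Ring R] [PartialOrder R] [StarRing R]
    [StarOrderedRing R] {P : Matrix n n R} (hP : IsStarProjection P) : P.PosSemidef := by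
  have h := posSemidef_conjTranspose_mul_self P
  rwa [← star_eq_conjTranspose, hP.isSelfAdjoint.star_eq, hP.isIdempotentElem.eq] at h

theorem PosSemidef.mul_mul_of_isSelfAdjoint {R : Type*} [Ring R] [PartialOrder R] [StarRing R]
    {ρ P : Matrix n n R} (hρ : ρ.PosSemidef) (hP : IsSelfAdjoint P) :
    (P * ρ * P).PosSemidef := by
  have h := hρ.mul_mul_conjTranspose_same P
  rwa [← star_eq_conjTranspose, hP.star_eq] at h

theorem trace_mul_mul_self_of_isIdempotentElem {R : Type*} [CommSemiring R] {P : Matrix n n R}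
    (hP : IsIdempotentElem P) (M : Matrix n n R) : (P * M * P).trace = (P * M).trace := by
  rw [trace_mul_cycle, hP.eq]

theorem re_trace_mul_le_sqrt_mul_sqrt (Y Z : Matrix n n ℂ) :
    (Y * Z).trace.re ≤ √(Y * Yᴴ).trace.re * √(Zᴴ * Z).trace.re := by
  have hinner (U V : Matrix n n ℂ) :
      inner ℂ (WithLp.toLp 2 (vec U)) (WithLp.toLp 2 (vec V)) = (Uᴴ * V).trace := by
    rw [EuclideanSpace.inner_eq_star_dotProduct, dotProduct_comm, star_vec_dotProduct_vec]
  have hnorm (U : Matrix n n ℂ) : ‖WithLp.toLp 2 (vec U)‖ = √(Uᴴ * U).trace.re := by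
    rw [norm_eq_sqrt_re_inner (𝕜 := ℂ), hinner]
    rfl
  have h := re_inner_le_norm (𝕜 := ℂ) (WithLp.toLp 2 (vec Yᴴ)) (WithLp.toLp 2 (vec Z))
  rwa [hinner, hnorm, hnorm, conjTranspose_conjTranspose] at h

variable [DecidableEq n]

theorem exists_eq_conjTranspose_mul_self {ρ : Matrix n n ℂ} (hρ : ρ.PosSemidef) :
    ∃ B : Matrix n n ℂ, ρ = Bᴴ * B := by
  open scoped MatrixOrder in
  exact CStarAlgebra.nonneg_iff_eq_star_mul_self.mp hρ.nonneg

def IsContraction (C : Matrix n n ℂ) : Prop :=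
  (1 - Cᴴ * C).PosSemidef

theorem IsContraction.neg {C : Matrix n n ℂ} (hC : IsContraction C) : IsContraction (-C) := by
  simpa [IsContraction] using hC

theorem IsContraction.re_trace_mul_mul_le_sqrt_mul_sqrt {C : Matrix n n ℂ} (hC : IsContraction C)
    (X Z : Matrix n n ℂ) :
    (C * X * Z).trace.re ≤ √(X * Xᴴ).trace.re * √(Zᴴ * Z).trace.re := by
  have hCX : (C * X * (C * X)ᴴ).trace.re ≤ (X * Xᴴ).trace.re := by
    have h := (PosSemidef.conjTranspose_mul_mul_same hC X).trace_nonneg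
    rw [Matrix.mul_sub, Matrix.sub_mul, trace_sub, Matrix.mul_one, trace_mul_comm Xᴴ,
      sub_nonneg] at h
    have hcyc : (Xᴴ * (Cᴴ * C) * X).trace = (C * X * (C * X)ᴴ).trace := by
      rw [conjTranspose_mul, trace_mul_comm (C * X)]
      simp only [Matrix.mul_assoc]
    exact (Complex.le_def.mp (hcyc ▸ h)).1
  calc (C * X * Z).trace.re ≤ √(C * X * (C * X)ᴴ).trace.re * √(Zᴴ * Z).trace.re :=
        re_trace_mul_le_sqrt_mul_sqrt _ _
    _ ≤ √(X * Xᴴ).trace.re * √(Zᴴ * Z).trace.re := by gcongr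

theorem IsContraction.re_trace_mul_le_re_trace {C K : Matrix n n ℂ} (hC : IsContraction C)
    (hK : K.PosSemidef) : (C * K).trace.re ≤ K.trace.re := by
  obtain ⟨D, rfl⟩ := exists_eq_conjTranspose_mul_self hK
  have h := hC.re_trace_mul_mul_le_sqrt_mul_sqrt Dᴴ D
  rwa [conjTranspose_conjTranspose, Matrix.mul_assoc,
    Real.mul_self_sqrt (Complex.le_def.mp hK.trace_nonneg).1] at h

theorem IsContraction.re_trace_mul_mul_mul_le_sqrt_mul_sqrt {C S T ρ : Matrix n n ℂ}
    (hC : IsContraction C) (hS : IsStarProjection S) (hT : IsStarProjection T)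
    (hρ : ρ.PosSemidef) :
    (C * (S * ρ * T)).trace.re ≤ √(S * ρ).trace.re * √(T * ρ).trace.re := by
  obtain ⟨B, rfl⟩ := exists_eq_conjTranspose_mul_self hρ
  have hS' : Sᴴ = S := hS.isSelfAdjoint.star_eq
  have hT' : Tᴴ = T := hT.isSelfAdjoint.star_eq
  calc (C * (S * (Bᴴ * B) * T)).trace.re = (C * (S * Bᴴ) * (B * T)).trace.re := by
        simp only [Matrix.mul_assoc]
    _ ≤ √(S * Bᴴ * (S * Bᴴ)ᴴ).trace.re * √((B * T)ᴴ * (B * T)).trace.re :=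
        hC.re_trace_mul_mul_le_sqrt_mul_sqrt _ _
    _ = √(S * (Bᴴ * B) * S).trace.re * √(T * (Bᴴ * B) * T).trace.re := by
        rw [conjTranspose_mul, conjTranspose_mul, conjTranspose_conjTranspose, hS', hT']
        simp only [Matrix.mul_assoc]
    _ = √(S * (Bᴴ * B)).trace.re * √(T * (Bᴴ * B)).trace.re := by
        rw [trace_mul_mul_self_of_isIdempotentElem hS.isIdempotentElem,
          trace_mul_mul_self_of_isIdempotentElem hT.isIdempotentElem]

theorem IsContraction.re_trace_mul_sub_mul_mul_le {C P ρ : Matrix n n ℂ} (hC : IsContraction C)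
    (hP : IsStarProjection P) (hρ : ρ.PosSemidef) (htr : ρ.trace = 1) :
    (C * (ρ - P * ρ * P)).trace.re ≤ 2 * √((1 - P) * ρ).trace.re := by
  have hQ : IsStarProjection (1 - P) := hP.one_sub
  have hQρ_nonneg : 0 ≤ ((1 - P) * ρ).trace.re := by
    rw [← trace_mul_mul_self_of_isIdempotentElem hQ.isIdempotentElem]
    exact (Complex.le_def.mp (hρ.mul_mul_of_isSelfAdjoint hQ.isSelfAdjoint).trace_nonneg).1
  have hPρ : (P * ρ).trace.re = 1 - ((1 - P) * ρ).trace.re := by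
    rw [Matrix.sub_mul, Matrix.one_mul, trace_sub, htr, Complex.sub_re, Complex.one_re]
    ring
  have hQρ := hC.re_trace_mul_mul_mul_le_sqrt_mul_sqrt hQ (.one _) hρ
  rw [Matrix.one_mul, Matrix.mul_one, htr, Complex.one_re, Real.sqrt_one, mul_one] at hQρ
  have hPρQ := hC.re_trace_mul_mul_mul_le_sqrt_mul_sqrt hP hQ hρ
  have hPρQ' : √(P * ρ).trace.re * √((1 - P) * ρ).trace.re ≤ √((1 - P) * ρ).trace.re :=
    mul_le_of_le_one_left (Real.sqrt_nonneg _) (Real.sqrt_le_one.mpr (by linarith))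
  have hdecomp : ρ - P * ρ * P = (1 - P) * ρ + P * ρ * (1 - P) := by noncomm_ring
  rw [hdecomp, Matrix.mul_add, trace_add, Complex.add_re]
  linarith

theorem traceNorm_eq_re_trace_cfc_sqrt (X : Matrix n n ℂ) :
    traceNorm X = (cfc Real.sqrt (Xᴴ * X)).trace.re / 2 := by
  rw [(posSemidef_conjTranspose_mul_self X).1.cfc_eq]
  rfl

/-- The witness is `C = |X|⁺ Xᴴ`, the adjoint of the partial isometry in the polar decomposition
of `X`; `Cᴴ C` is the projection onto the range of `X`. -/
theorem exists_isContraction_trace_mul_eq (X : Matrix n n ℂ) :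
    ∃ C : Matrix n n ℂ, IsContraction C ∧
      (C * X).trace = (cfc Real.sqrt (Xᴴ * X)).trace := by
  set H := Xᴴ * X
  have hmul (f g : ℝ → ℝ) : cfc f H * cfc g H = cfc (fun t => f t * g t) H :=
    (cfc_mul f g H (finite_real_spectrum.continuousOn f)
      (finite_real_spectrum.continuousOn g)).symm
  have hid : cfc (fun t : ℝ => t) H = H :=
    cfc_id' ℝ H (isHermitian_conjTranspose_mul_self X).isSelfAdjoint
  set T := cfc (fun t : ℝ => (√t)⁻¹) H
  have hT : Tᴴ = T := (cfc_predicate (fun t : ℝ => (√t)⁻¹) H : IsSelfAdjoint T).star_eq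
  have hinv_mul (t : ℝ) : (√t)⁻¹ * t = √t := by rw [← div_eq_inv_mul, Real.div_sqrt]
  have hinv_mul_mul (t : ℝ) : (√t)⁻¹ * √t * (√t)⁻¹ = (√t)⁻¹ := by
    simpa only [inv_inv] using mul_inv_mul_cancel (√t)⁻¹
  have hTH : T * H = cfc Real.sqrt H := by
    conv_lhs => rw [← hid, hmul]
    simp only [hinv_mul]
  have hTTHTT : T * T * H * T * T = T * T := by
    conv_lhs => rw [← hid, hmul, hmul, hmul, hmul]
    rw [hmul]
    congr 1
    funext t
    rw [mul_assoc (√t)⁻¹ (√t)⁻¹ t, hinv_mul, hinv_mul_mul]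
  refine ⟨T * Xᴴ, ?_, by rw [Matrix.mul_assoc, hTH]⟩
  have hproj : IsStarProjection ((T * Xᴴ)ᴴ * (T * Xᴴ)) := by
    refine ⟨?_, ?_⟩
    · rw [IsIdempotentElem, conjTranspose_mul, conjTranspose_conjTranspose, hT]
      calc X * T * (T * Xᴴ) * (X * T * (T * Xᴴ)) = X * (T * T * H * T * T) * Xᴴ := by
            simp only [H, Matrix.mul_assoc]
        _ = X * T * (T * Xᴴ) := by rw [hTTHTT]; simp only [Matrix.mul_assoc]
    · simp [IsSelfAdjoint, star_eq_conjTranspose, conjTranspose_mul]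
  exact hproj.one_sub.posSemidef

theorem two_mul_traceNorm_le_of_forall_isContraction (X : Matrix n n ℂ) {b : ℝ}
    (h : ∀ C : Matrix n n ℂ, IsContraction C → (C * X).trace.re ≤ b) :
    2 * traceNorm X ≤ b := by
  obtain ⟨C, hC, hCX⟩ := exists_isContraction_trace_mul_eq X
  rw [traceNorm_eq_re_trace_cfc_sqrt, ← hCX]
  linarith [h C hC]

end Contraction

section PartialTrace

variable {A B : Type*} [Fintype A] [Fintype B]

theorem ptraceA_add (M N : Matrix (A × B) (A × B) ℂ) :
    ptraceA (M + N) = ptraceA M + ptraceA N := by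
  ext b b'
  simp [ptraceA, Finset.sum_add_distrib]

theorem trace_ptraceA (M : Matrix (A × B) (A × B) ℂ) : (ptraceA M).trace = M.trace := by
  simp only [trace, diag, ptraceA, Fintype.sum_prod_type]
  exact Finset.sum_comm

theorem ptraceA_kronecker (X : Matrix A A ℂ) (N : Matrix B B ℂ) :
    ptraceA (X ⊗ₖ N) = X.trace • N := by
  ext b b'
  simp [ptraceA, trace, Finset.sum_mul]

theorem ptraceA_eq_sum_submatrix (M : Matrix (A × B) (A × B) ℂ) :
    ptraceA M = ∑ a, M.submatrix (Prod.mk a) (Prod.mk a) := by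
  ext b b'
  simp [ptraceA, Matrix.sum_apply]

theorem PosSemidef.ptraceA {M : Matrix (A × B) (A × B) ℂ} (hM : M.PosSemidef) :
    (ptraceA M).PosSemidef := by
  rw [ptraceA_eq_sum_submatrix]
  exact posSemidef_sum _ fun a _ => hM.submatrix _

theorem isStarProjection_vecMulVec {ψ : A → ℂ} (hψ : star ψ ⬝ᵥ ψ = 1) :
    IsStarProjection (vecMulVec ψ (star ψ)) where
  isIdempotentElem := by rw [IsIdempotentElem, vecMulVec_mul_vecMulVec, hψ, one_smul]
  isSelfAdjoint := by rw [IsSelfAdjoint, star_eq_conjTranspose, conjTranspose_vecMulVec, star_star]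

theorem _root_.IsStarProjection.kronecker {R l m : Type*} [CommRing R] [StarRing R]
    [Fintype l] [Fintype m] {X : Matrix l l R} {Y : Matrix m m R} (hX : IsStarProjection X)
    (hY : IsStarProjection Y) : IsStarProjection (X ⊗ₖ Y) where
  isIdempotentElem := by
    rw [IsIdempotentElem, ← mul_kronecker_mul, hX.isIdempotentElem.eq, hY.isIdempotentElem.eq]
  isSelfAdjoint := by
    rw [IsSelfAdjoint, star_eq_conjTranspose, conjTranspose_kronecker, ← star_eq_conjTranspose,
      ← star_eq_conjTranspose, hX.isSelfAdjoint.star_eq, hY.isSelfAdjoint.star_eq]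

variable [DecidableEq B]

theorem ptraceA_kronecker_one_mul (X : Matrix A A ℂ) (M : Matrix (A × B) (A × B) ℂ) :
    ptraceA ((X ⊗ₖ (1 : Matrix B B ℂ)) * M) = ptraceA (M * (X ⊗ₖ 1)) := by
  ext b b'
  simp only [ptraceA, mul_apply, kroneckerMap_apply, one_apply, mul_ite, mul_one, mul_zero, ite_mul,
    zero_mul, Fintype.sum_prod_type, Finset.sum_ite_eq, Finset.mem_univ, ↓reduceIte,
    Finset.sum_ite_eq']
  rw [Finset.sum_comm]
  exact Finset.sum_congr rfl fun _ _ => Finset.sum_congr rfl fun _ _ => mul_comm _ _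

theorem trace_kronecker_one_mul (X : Matrix A A ℂ) (M : Matrix (A × B) (A × B) ℂ) :
    ((X ⊗ₖ (1 : Matrix B B ℂ)) * M).trace = (X * ptraceB M).trace := by
  simp only [trace, diag_apply, mul_apply, kroneckerMap_apply, one_apply, mul_ite, mul_one,
    mul_zero, ite_mul, zero_mul, Fintype.sum_prod_type, Finset.sum_ite_eq, Finset.mem_univ,
    ↓reduceIte, ptraceB, Finset.mul_sum]
  exact Finset.sum_congr rfl fun _ _ => Finset.sum_comm

theorem vecMulVec_kronecker_one_mul_mul_kronecker_one {ψ : A → ℂ} (hψ : star ψ ⬝ᵥ ψ = 1)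
    (M : Matrix (A × B) (A × B) ℂ) :
    (vecMulVec ψ (star ψ) ⊗ₖ (1 : Matrix B B ℂ)) * M * (vecMulVec ψ (star ψ) ⊗ₖ 1) =
      vecMulVec ψ (star ψ) ⊗ₖ
        ptraceA ((vecMulVec ψ (star ψ) ⊗ₖ (1 : Matrix B B ℂ)) * M *
          (vecMulVec ψ (star ψ) ⊗ₖ 1)) := by
  have hσ :
      (vecMulVec ψ (star ψ) ⊗ₖ (1 : Matrix B B ℂ)) * M * (vecMulVec ψ (star ψ) ⊗ₖ 1) =
      vecMulVec ψ (star ψ) ⊗ₖ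
        of fun b b' => ∑ a, ∑ a', star (ψ a) * M (a, b) (a', b') * ψ a' := by
    ext ⟨a, b⟩ ⟨a', b'⟩
    simp only [mul_apply, kroneckerMap_apply, vecMulVec_apply, Pi.star_apply, one_apply, mul_ite,
      mul_one, mul_zero, ite_mul, zero_mul, Fintype.sum_prod_type, Finset.sum_ite_eq,
      Finset.mem_univ, ↓reduceIte, Finset.sum_mul, Finset.sum_ite_eq', of_apply, Finset.mul_sum]
    rw [Finset.sum_comm]
    exact Finset.sum_congr rfl fun _ _ => Finset.sum_congr rfl fun _ _ => by ring
  rw [hσ, ptraceA_kronecker, trace_vecMulVec, dotProduct_comm, hψ, one_smul]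

/-- The cross terms `P M Q` and `Q M P` vanish under `Tr_A`, since `Tr_A` is cyclic with respect
to `X ⊗ 1` and `Q P = P Q = 0`. -/
theorem ptraceA_eq_add_of_isStarProjection [DecidableEq A] {X : Matrix A A ℂ}
    (hX : IsStarProjection X) (M : Matrix (A × B) (A × B) ℂ) :
    ptraceA M = ptraceA ((X ⊗ₖ (1 : Matrix B B ℂ)) * M * (X ⊗ₖ 1)) +
      ptraceA ((1 - X ⊗ₖ (1 : Matrix B B ℂ)) * M * (1 - X ⊗ₖ 1)) := by
  set P := X ⊗ₖ (1 : Matrix B B ℂ)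
  have hP : IsStarProjection P := hX.kronecker (.one _)
  have hPMQ : ptraceA (P * M * (1 - P)) = 0 := by
    rw [Matrix.mul_assoc, ptraceA_kronecker_one_mul, Matrix.mul_assoc, hP.one_sub_mul_self,
      Matrix.mul_zero]
    ext; simp [ptraceA]
  have hQMP : ptraceA ((1 - P) * M * P) = 0 := by
    rw [← ptraceA_kronecker_one_mul, ← Matrix.mul_assoc, hP.mul_one_sub_self, Matrix.zero_mul]
    ext; simp [ptraceA]
  have hsplit : M = P * M * P + P * M * (1 - P) + ((1 - P) * M * P + (1 - P) * M * (1 - P)) := by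
    noncomm_ring
  conv_lhs => rw [hsplit]
  rw [ptraceA_add, ptraceA_add, ptraceA_add, hPMQ, hQMP, add_zero, zero_add]

theorem sub_vecMulVec_kronecker_ptraceA [DecidableEq A] {ψ : A → ℂ}
    (hψ : star ψ ⬝ᵥ ψ = 1) (M : Matrix (A × B) (A × B) ℂ) :
    M - vecMulVec ψ (star ψ) ⊗ₖ ptraceA M =
      (M - (vecMulVec ψ (star ψ) ⊗ₖ (1 : Matrix B B ℂ)) * M *
          (vecMulVec ψ (star ψ) ⊗ₖ 1)) -
        vecMulVec ψ (star ψ) ⊗ₖ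
          ptraceA ((1 - vecMulVec ψ (star ψ) ⊗ₖ (1 : Matrix B B ℂ)) * M *
            (1 - vecMulVec ψ (star ψ) ⊗ₖ 1)) := by
  rw [ptraceA_eq_add_of_isStarProjection (isStarProjection_vecMulVec hψ) M, kronecker_add,
    ← vecMulVec_kronecker_one_mul_mul_kronecker_one hψ]
  abel

end PartialTrace

end Matrix

/-- Gentle measurement corollary: if `Tr(π Tr_B ρ_AB) ≥ 1 − δ` for a pure state
`π = |ψ⟩⟨ψ|` on system `A`, then `‖ρ_AB − π ⊗ Tr_A ρ_AB‖_Tr ≤ 2√δ + δ`. -/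
theorem gentle_measurement {A B : Type*} [Fintype A] [DecidableEq A]
    [Fintype B] [DecidableEq B]
    (ρAB : Matrix (A × B) (A × B) ℂ) (hρ : IsDensity ρAB)
    (ψ : A → ℂ) (hψ : star ψ ⬝ᵥ ψ = 1) (δ : ℝ) (hδ : 0 ≤ δ)
    (h : 1 - δ ≤ ((Matrix.vecMulVec ψ (star ψ) * ptraceB ρAB).trace).re) :
    traceNorm (ρAB - Matrix.vecMulVec ψ (star ψ) ⊗ₖ ptraceA ρAB)
      ≤ 2 * Real.sqrt δ + δ := by
  obtain ⟨hρpsd, hρtr⟩ := hρ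
  set π := vecMulVec ψ (star ψ)
  have hπ : IsStarProjection π := isStarProjection_vecMulVec hψ
  set P := π ⊗ₖ (1 : Matrix B B ℂ)
  have hP : IsStarProjection P := hπ.kronecker (.one _)
  set K := π ⊗ₖ ptraceA ((1 - P) * ρAB * (1 - P))
  have hK : K.PosSemidef :=
    hπ.posSemidef.kronecker (hρpsd.mul_mul_of_isSelfAdjoint hP.one_sub.isSelfAdjoint).ptraceA
  have hε : ((1 - P) * ρAB).trace.re ≤ δ := by
    rw [Matrix.sub_mul, Matrix.one_mul, trace_sub, hρtr, trace_kronecker_one_mul, Complex.sub_re,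
      Complex.one_re]
    linarith
  have htrK : K.trace = ((1 - P) * ρAB).trace := by
    rw [trace_kronecker, trace_ptraceA, trace_mul_mul_self_of_isIdempotentElem
      hP.one_sub.isIdempotentElem, trace_vecMulVec, dotProduct_comm, hψ, one_mul]
  have hbound : 2 * traceNorm (ρAB - π ⊗ₖ ptraceA ρAB) ≤ 2 * √δ + δ := by
    refine two_mul_traceNorm_le_of_forall_isContraction _ fun C hC => ?_
    have hρP := hC.re_trace_mul_sub_mul_mul_le hP hρpsd hρtr
    have hKC := hC.neg.re_trace_mul_le_re_trace hK
    rw [Matrix.neg_mul, trace_neg, Complex.neg_re, htrK] at hKC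
    rw [sub_vecMulVec_kronecker_ptraceA hψ, Matrix.mul_sub, trace_sub, Complex.sub_re]
    linarith [Real.sqrt_le_sqrt hε]
  linarith [Real.sqrt_nonneg δ]
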